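/- Let F be an infinite field and let I = T_{Z_3}(UT_3(F)^{(-)}) be the ideal of Z_3-graded identities of UT_3(F)^{(-)} with its canonical Z_3-grading. If f, g ∈ B_{(1,1)} and V_f ≤_2 V_g in the Higman order on finite sequences of pairs of nonnegative integers (pairs compared componentwise), then g is a consequence of f modulo I, i.e. g ∈ ⟨{f} ∪ I⟩. -/

import Mathlib

open FreeLieAlgebra

/-- The free `ℤ/n`-graded Lie algebra over `F`: the free Lie algebra on countably many
variables of each homogeneous degree `g : ZMod n`; the variable `(g, i)` is the `i`-th
variable of degree `g`. -/
abbrev FreeGLie (F : Type) [Field F] (n : ℕ) := FreeLieAlgebra F (ZMod n × ℕ)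

/-- Homogeneous Lie monomials (bracket words) of degree `g`. -/
inductive HomWord (F : Type) [Field F] (n : ℕ) : ZMod n → FreeGLie F n → Prop
  | of (g : ZMod n) (i : ℕ) : HomWord F n g (FreeLieAlgebra.of F (g, i))
  | bracket {g h : ZMod n} {x y : FreeGLie F n} :
      HomWord F n g x → HomWord F n h y → HomWord F n (g + h) ⁅x, y⁆

/-- The homogeneous component of degree `g` of the free graded Lie algebra. -/
noncomputable def homComp (F : Type) [Field F] (n : ℕ) (g : ZMod n) : Submodule F (FreeGLie F n) :=
  Submodule.span F {x | HomWord F n g x}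

/-- A graded substitution sends each variable of degree `g` to a homogeneous element
of degree `g`; it induces a grading-preserving endomorphism via `FreeLieAlgebra.lift`,
and every grading-preserving endomorphism arises this way. -/
def IsGradedSubst (F : Type) [Field F] (n : ℕ) (s : ZMod n × ℕ → FreeGLie F n) : Prop :=
  ∀ g i, s (g, i) ∈ homComp F n g

/-- `S` is a `T`-ideal: the carrier of a Lie ideal of the free graded Lie algebra which is
stable under all grading-preserving endomorphisms. -/
structure IsTIdeal (F : Type) [Field F] (n : ℕ) (S : Set (FreeGLie F n)) : Prop where
  isIdeal : ∃ J : LieIdeal F (FreeGLie F n), S = ↑J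
  substClosed : ∀ s, IsGradedSubst F n s → ∀ x ∈ S, FreeLieAlgebra.lift F s x ∈ S

/-- The smallest `T`-ideal containing `S`. -/
def TClosure (F : Type) [Field F] (n : ℕ) (S : Set (FreeGLie F n)) : Set (FreeGLie F n) :=
  ⋂₀ {T | IsTIdeal F n T ∧ S ⊆ T}

/-- The degree-`g` component of the canonical `ZMod n`-grading of `UT_n(F)⁽⁻⁾`:
the span of the matrix units `e_{ij}` with `i ≤ j` and `j - i = g` in `ZMod n`. -/
def Lcomp (F : Type) [Field F] (n : ℕ) (g : ZMod n) : Submodule F (Matrix (Fin n) (Fin n) F) :=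
  Submodule.span F {A | ∃ i j : Fin n, i ≤ j ∧ ((j : ℕ) : ZMod n) - ((i : ℕ) : ZMod n) = g ∧
    A = Matrix.single i j 1}

attribute [local instance 100] LieRing.ofAssociativeRing

/-- The set of `ZMod n`-graded identities of `UT_n(F)⁽⁻⁾` (with commutator bracket),
i.e. the elements of the free graded Lie algebra vanishing under every substitution that
sends each variable of degree `g` into the component `Lcomp F n g`. -/
def gradedId (F : Type) [Field F] (n : ℕ) : Set (FreeGLie F n) :=
  {f | ∀ v : ZMod n × ℕ → Matrix (Fin n) (Fin n) F,
    (∀ g i, v (g, i) ∈ Lcomp F n g) → FreeLieAlgebra.lift F v f = 0}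

/-- The left-normed bracket `[x, l₁, l₂, …]`. -/
noncomputable def lnw (F : Type) [Field F] (n : ℕ) (x : FreeGLie F n)
    (l : List (FreeGLie F n)) : FreeGLie F n :=
  l.foldl (fun a b => ⁅a, b⁆) x

/-- The degree-0 variable `y_i`. -/
noncomputable def yv (F : Type) [Field F] (n : ℕ) (i : ℕ) : FreeGLie F n :=
  FreeLieAlgebra.of F ((0 : ZMod n), i)

/-- The list `y_off, …, y_off (a₁ times), y_{off+1}, … (a₂ times), …` of degree-0
variables with multiplicities given by the list `a`. -/
noncomputable def yblock (F : Type) [Field F] (n : ℕ) : ℕ → List ℕ → List (FreeGLie F n)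
  | _, [] => []
  | off, a :: rest => List.replicate a (yv F n off) ++ yblock F n (off + 1) rest

/-- The element `[z₁, a₁y₁,…,aₘyₘ, z₂, b₁y₁,…,bₘyₘ]` of `B₍₁,₁₎`, where `z₁, z₂` are the
degree-1 variables `(1,0)`, `(1,1)`; the exponent data is the list `p = ((a₁,b₁),…,(aₘ,bₘ))`,
which is exactly the sequence `V` attached to the element. -/
noncomputable def B11 (F : Type) [Field F] (p : List (ℕ × ℕ)) : FreeGLie F 3 :=
  lnw F 3 (FreeLieAlgebra.of F ((1 : ZMod 3), 0))
    (yblock F 3 0 (p.map Prod.fst) ++ [FreeLieAlgebra.of F ((1 : ZMod 3), 1)] ++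
      yblock F 3 0 (p.map Prod.snd))

/-!
Modulo `I` the degree-0 variables commute, since the degree-0 component of `UT₃(F)` is
the diagonal. So inside each of the two `y`-blocks of an element of `B₍₁,₁₎` the variables may be
permuted freely, and the element only depends on the multisets of indices of the two blocks.
An embedding `V_f ≤₂ V_g` gives a reindexing `φ` of the variables of `f` under which both
multisets of `f` are contained in those of `g`. The substitution `y_k ↦ y_{φ k}`,
`z₁ ↦ [z₁, A]`, with `A` the missing `y`'s of the first block, followed by bracketing with the
missing `y`'s of the second block, turns `f` into `g` up to such permutations.
-/

section LeftNormed

variable {F : Type} [Field F] {n : ℕ}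

lemma lnw_cons (x a : FreeGLie F n) (l : List (FreeGLie F n)) :
    lnw F n x (a :: l) = lnw F n ⁅x, a⁆ l := rfl

lemma lnw_append (x : FreeGLie F n) (l m : List (FreeGLie F n)) :
    lnw F n x (l ++ m) = lnw F n (lnw F n x l) m :=
  List.foldl_append

lemma lnw_sub (x x' : FreeGLie F n) (l : List (FreeGLie F n)) :
    lnw F n (x - x') l = lnw F n x l - lnw F n x' l := by
  induction l generalizing x x' with
  | nil => rfl
  | cons a l ih => rw [lnw_cons, lnw_cons, lnw_cons, sub_lie, ih]

lemma lift_lnw (s : ZMod n × ℕ → FreeGLie F n) (x : FreeGLie F n) (l : List (FreeGLie F n)) :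
    lift F s (lnw F n x l) = lnw F n (lift F s x) (l.map (lift F s)) := by
  induction l generalizing x with
  | nil => rfl
  | cons a l ih => rw [lnw_cons, ih, LieHom.map_lie, List.map_cons, lnw_cons]

lemma lnw_mem (J : LieIdeal F (FreeGLie F n)) {x : FreeGLie F n} (hx : x ∈ J)
    (l : List (FreeGLie F n)) : lnw F n x l ∈ J := by
  induction l generalizing x with
  | nil => exact hx
  | cons a l ih => exact ih (lie_mem_left F _ J _ a hx)

lemma lnw_sub_lnw_mem (J : LieIdeal F (FreeGLie F n)) {x x' : FreeGLie F n} (hx : x - x' ∈ J)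
    (l : List (FreeGLie F n)) : lnw F n x l - lnw F n x' l ∈ J := by
  rw [← lnw_sub]
  exact lnw_mem J hx l

lemma lnw_map_sub_mem_of_perm {ι : Type*} (J : LieIdeal F (FreeGLie F n))
    (f : ι → FreeGLie F n) (hf : ∀ i j, ⁅f i, f j⁆ ∈ J) {l l' : List ι} (h : l.Perm l')
    (x : FreeGLie F n) :
    lnw F n x (l.map f) - lnw F n x (l'.map f) ∈ J := by
  induction h generalizing x with
  | nil => simp
  | cons a _ ih => exact ih _
  | swap a b l =>
    simp only [List.map_cons, lnw_cons]
    refine lnw_sub_lnw_mem J ?_ _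
    have jacobi : ⁅⁅x, f b⁆, f a⁆ - ⁅⁅x, f a⁆, f b⁆ = ⁅x, ⁅f b, f a⁆⁆ := by
      rw [leibniz_lie x (f b) (f a), ← lie_skew (f b) ⁅x, f a⁆]
      abel
    rw [jacobi]
    exact J.lie_mem (hf b a)
  | trans _ _ ih₁ ih₂ => simpa using add_mem (ih₁ x) (ih₂ x)

lemma homWord_lnw_yv {g : ZMod n} {x : FreeGLie F n} (hx : HomWord F n g x) (l : List ℕ) :
    HomWord F n g (lnw F n x (l.map (yv F n))) := by
  induction l generalizing x with
  | nil => exact hx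
  | cons a l ih =>
    refine ih ?_
    simpa [yv] using HomWord.bracket hx (HomWord.of (0 : ZMod n) a)

end LeftNormed

section DegreeZeroCommute

variable {F : Type} [Field F] {n : ℕ}

lemma isDiag_of_mem_Lcomp_zero {A : Matrix (Fin n) (Fin n) F} (hA : A ∈ Lcomp F n 0) :
    A.IsDiag := by
  induction hA using Submodule.span_induction with
  | mem A hA =>
    obtain ⟨i, j, -, hij, rfl⟩ := hA
    have : i = j := by
      rw [sub_eq_zero, ZMod.natCast_eq_natCast_iff', Nat.mod_eq_of_lt j.isLt,
        Nat.mod_eq_of_lt i.isLt] at hij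
      exact Fin.ext hij.symm
    subst this
    rw [← Matrix.diagonal_single]
    exact Matrix.isDiag_diagonal _
  | zero => exact Matrix.isDiag_zero
  | add A B _ _ hA hB => exact hA.add hB
  | smul c A _ hA => exact hA.smul c

lemma commute_of_mem_Lcomp_zero {A B : Matrix (Fin n) (Fin n) F} (hA : A ∈ Lcomp F n 0)
    (hB : B ∈ Lcomp F n 0) : Commute A B := by
  rw [← (isDiag_of_mem_Lcomp_zero hA).diagonal_diag,
    ← (isDiag_of_mem_Lcomp_zero hB).diagonal_diag]
  exact Matrix.commute_diagonal _ _

lemma yv_lie_yv_mem_gradedId (i j : ℕ) : ⁅yv F n i, yv F n j⁆ ∈ gradedId F n := by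
  intro v hv
  rw [LieHom.map_lie, yv, yv, lift_of_apply, lift_of_apply, Ring.lie_def,
    (commute_of_mem_Lcomp_zero (hv 0 i) (hv 0 j)).eq, sub_self]

end DegreeZeroCommute

def blockIndices : ℕ → List ℕ → List ℕ
  | _, [] => []
  | off, a :: r => List.replicate a off ++ blockIndices (off + 1) r

lemma yblock_eq_map_blockIndices (F : Type) [Field F] (n : ℕ) (off : ℕ) (l : List ℕ) :
    yblock F n off l = (blockIndices off l).map (yv F n) := by
  induction l generalizing off with
  | nil => rfl
  | cons a r ih => simp [yblock, blockIndices, ih, List.map_replicate]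

lemma blockIndices_succ (off : ℕ) (l : List ℕ) :
    blockIndices (off + 1) l = (blockIndices off l).map Nat.succ := by
  induction l generalizing off with
  | nil => rfl
  | cons a r ih => simp [blockIndices, ih, List.map_replicate]

lemma le_of_mem_blockIndices {off k : ℕ} {l : List ℕ} (hk : k ∈ blockIndices off l) :
    off ≤ k := by
  induction l generalizing off with
  | nil => simp [blockIndices] at hk
  | cons a r ih =>
    rcases List.mem_append.mp hk with hk | hk
    · exact (List.eq_of_mem_replicate hk).ge
    · exact (ih hk).trans' (Nat.le_succ off)

/-- The reindexing `φ` depends only on the embedding, so it serves all components at once. -/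
lemma exists_map_blockIndices_subperm {α β : Type*} {R : α → β → Prop} {p : List α}
    {q : List β} (h : List.SublistForall₂ R p q) (off : ℕ) :
    ∃ φ : ℕ → ℕ, ∀ (u : α → ℕ) (v : β → ℕ), (∀ a b, R a b → u a ≤ v b) →
      ((blockIndices off (p.map u)).map φ).Subperm (blockIndices off (q.map v)) := by
  induction h generalizing off with
  | nil => exact ⟨id, fun _ _ _ => by simp [blockIndices]⟩
  | @cons a b p q hab _ ih =>
    obtain ⟨φ, hφ⟩ := ih (off + 1)
    refine ⟨fun k => if k = off then off else φ k, fun u v huv => ?_⟩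
    have htail : (blockIndices (off + 1) (p.map u)).map (fun k => if k = off then off else φ k)
        = (blockIndices (off + 1) (p.map u)).map φ :=
      List.map_congr_left fun k hk =>
        if_neg (Nat.succ_le_iff.mp (le_of_mem_blockIndices hk)).ne'
    simp only [List.map_cons, blockIndices, List.map_append, List.map_replicate, if_pos, htail]
    exact ((List.replicate_sublist_replicate off).mpr (huv a b hab)).subperm.append
      (hφ u v huv)
  | @cons_right b p q _ ih =>
    obtain ⟨φ, hφ⟩ := ih (off + 1)
    refine ⟨φ ∘ Nat.succ, fun u v huv => ?_⟩
    rw [← List.map_map, ← blockIndices_succ]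
    exact (hφ u v huv).trans (List.sublist_append_right _ _).subperm

lemma List.Subperm.exists_perm_append {α : Type*} {l m : List α} (h : l.Subperm m) :
    ∃ r, m.Perm (l ++ r) := by
  obtain ⟨k, hkl, hkm⟩ := h
  obtain ⟨r, hr⟩ := hkm.exists_perm_append
  exact ⟨r, hr.trans (hkl.append_right r)⟩

section TwoBlock

variable {F : Type} [Field F]

variable (F) in
noncomputable def twoBlock (l₁ l₂ : List ℕ) : FreeGLie F 3 :=
  lnw F 3 (of F ((1 : ZMod 3), 0))
    (l₁.map (yv F 3) ++ [of F ((1 : ZMod 3), 1)] ++ l₂.map (yv F 3))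

lemma B11_eq_twoBlock (p : List (ℕ × ℕ)) :
    B11 F p =
      twoBlock F (blockIndices 0 (p.map Prod.fst)) (blockIndices 0 (p.map Prod.snd)) := by
  simp only [B11, twoBlock, yblock_eq_map_blockIndices]

lemma twoBlock_eq_lnw (l₁ l₂ : List ℕ) :
    twoBlock F l₁ l₂ =
      lnw F 3 ⁅lnw F 3 (of F ((1 : ZMod 3), 0)) (l₁.map (yv F 3)), of F ((1 : ZMod 3), 1)⁆
        (l₂.map (yv F 3)) := by
  rw [twoBlock, lnw_append, lnw_append]
  rfl

lemma twoBlock_sub_mem_of_perm (J : LieIdeal F (FreeGLie F 3))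
    (hyy : ∀ i j, ⁅yv F 3 i, yv F 3 j⁆ ∈ J) {l₁ l₁' l₂ l₂' : List ℕ} (h₁ : l₁.Perm l₁')
    (h₂ : l₂.Perm l₂') : twoBlock F l₁ l₂ - twoBlock F l₁' l₂' ∈ J := by
  rw [← sub_add_sub_cancel _ (twoBlock F l₁' l₂)]
  refine add_mem ?_ ?_
  · rw [twoBlock_eq_lnw, twoBlock_eq_lnw]
    refine lnw_sub_lnw_mem J ?_ _
    rw [← sub_lie]
    exact lie_mem_left F _ J _ _ (lnw_map_sub_mem_of_perm J _ hyy h₁ _)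
  · rw [twoBlock_eq_lnw, twoBlock_eq_lnw]
    exact lnw_map_sub_mem_of_perm J _ hyy h₂ _

lemma twoBlock_append_mem (J : LieIdeal F (FreeGLie F 3)) {l₁ l₂ : List ℕ}
    (h : twoBlock F l₁ l₂ ∈ J) (r : List ℕ) : twoBlock F l₁ (l₂ ++ r) ∈ J := by
  rw [twoBlock_eq_lnw, List.map_append, lnw_append, ← twoBlock_eq_lnw]
  exact lnw_mem J h _

variable (F) in
noncomputable def reindexSubst (φ : ℕ → ℕ) (A : List ℕ) : ZMod 3 × ℕ → FreeGLie F 3 :=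
  Function.update (fun x => if x.1 = 0 then yv F 3 (φ x.2) else of F x) ((1 : ZMod 3), 0)
    (lnw F 3 (of F ((1 : ZMod 3), 0)) (A.map (yv F 3)))

lemma isGradedSubst_reindexSubst (φ : ℕ → ℕ) (A : List ℕ) :
    IsGradedSubst F 3 (reindexSubst F φ A) := by
  intro g i
  refine Submodule.subset_span ?_
  by_cases hz₁ : (g, i) = ((1 : ZMod 3), 0)
  · obtain ⟨rfl, rfl⟩ := Prod.mk.inj hz₁
    rw [reindexSubst, Function.update_self]
    exact homWord_lnw_yv (HomWord.of _ _) A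
  · rw [reindexSubst, Function.update_of_ne hz₁]
    by_cases hg : g = 0
    · subst hg
      exact HomWord.of _ _
    · simpa [hg] using HomWord.of g i

lemma lift_reindexSubst_twoBlock (φ : ℕ → ℕ) (A l₁ l₂ : List ℕ) :
    lift F (reindexSubst F φ A) (twoBlock F l₁ l₂) =
      twoBlock F (A ++ l₁.map φ) (l₂.map φ) := by
  have hy : ∀ k, lift F (reindexSubst F φ A) (yv F 3 k) = yv F 3 (φ k) := fun k => by
    rw [yv, lift_of_apply, reindexSubst, Function.update_of_ne (by simp)]
    rfl
  have hz₁ : lift F (reindexSubst F φ A) (of F ((1 : ZMod 3), 0)) =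
      lnw F 3 (of F ((1 : ZMod 3), 0)) (A.map (yv F 3)) := by
    rw [lift_of_apply, reindexSubst, Function.update_self]
  have hz₂ :
      lift F (reindexSubst F φ A) (of F ((1 : ZMod 3), 1)) = of F ((1 : ZMod 3), 1) := by
    rw [lift_of_apply, reindexSubst, Function.update_of_ne (by simp)]
    exact if_neg (by decide)
  rw [twoBlock, lift_lnw, hz₁, twoBlock]
  simp only [List.map_append, List.map_map, Function.comp_def, hy, List.map_cons, hz₂,
    List.map_nil, lnw_append]

lemma twoBlock_mem_of_subperm {J : LieIdeal F (FreeGLie F 3)}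
    (hJ : IsTIdeal F 3 (J : Set _)) (hyy : ∀ i j, ⁅yv F 3 i, yv F 3 j⁆ ∈ J) {φ : ℕ → ℕ}
    {l₁ l₂ m₁ m₂ : List ℕ}
    (h₁ : (l₁.map φ).Subperm m₁) (h₂ : (l₂.map φ).Subperm m₂) (h : twoBlock F l₁ l₂ ∈ J) :
    twoBlock F m₁ m₂ ∈ J := by
  obtain ⟨A, hA⟩ := h₁.exists_perm_append
  obtain ⟨B, hB⟩ := h₂.exists_perm_append
  have hsubst := hJ.substClosed _ (isGradedSubst_reindexSubst φ A) _ h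
  rw [lift_reindexSubst_twoBlock] at hsubst
  have hperm := twoBlock_sub_mem_of_perm J hyy (hA.trans List.perm_append_comm) hB
  exact (J.sub_mem_iff_left (twoBlock_append_mem J hsubst B)).mp hperm

end TwoBlock

theorem stmt4_general (F : Type) [Field F] (p q : List (ℕ × ℕ))
    (h : List.SublistForall₂ (· ≤ ·) p q) :
    B11 F q ∈ TClosure F 3 ({B11 F p} ∪ gradedId F 3) := by
  refine Set.mem_sInter.mpr fun T ⟨hT, hsub⟩ => ?_
  obtain ⟨J, rfl⟩ := hT.isIdeal
  obtain ⟨φ, hφ⟩ := exists_map_blockIndices_subperm h 0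
  have hyy : ∀ i j, ⁅yv F 3 i, yv F 3 j⁆ ∈ J := fun i j =>
    hsub (Or.inr (yv_lie_yv_mem_gradedId i j))
  have hp : B11 F p ∈ J := hsub (Or.inl rfl)
  rw [B11_eq_twoBlock] at hp ⊢
  exact twoBlock_mem_of_subperm hT hyy (hφ _ _ fun _ _ hab => hab.1)
    (hφ _ _ fun _ _ hab => hab.2) hp

/-- If `f, g ∈ B₍₁,₁₎` and `V_f ≤₂ V_g` in the Higman order on finite
sequences of pairs of nonnegative integers (pairs compared componentwise), then `g` is a
consequence of `f` modulo the ideal `I` of `ZMod 3`-graded identities of `UT₃(F)⁽⁻⁾`. -/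
theorem stmt4 (F : Type) [Field F] [Infinite F] (p q : List (ℕ × ℕ))
    (h : List.SublistForall₂ (· ≤ ·) p q) :
    B11 F q ∈ TClosure F 3 ({B11 F p} ∪ gradedId F 3) :=
  stmt4_general F p q h
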